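/- arXiv:1504.01941 — 3 statements merged into one kernel-verified Lean document; each statement's English description precedes it below -/
import Mathlib

section
/- Let F_k := ∑_{m=k}^{n} M_q(t_{m,k}) for 1 ≤ k ≤ n (so F_n = I). Then the sum of the matrices M_q(g) over all permutations factors as the ordered product ∑_{g∈S_n} M_q(g) = F_n · F_{n-1} ⋯ F_2 · F_1, with the factor F_k appearing to the left of F_{k'} whenever k > k'. (This is the matrix form of the factorization α*_n = β*_1·β*_2⋯β*_n in the twisted group algebra A(S_n), where β*_{n-k+1} = ∑_{m=k}^{n} t*_{m,k}.) -/
/-- The square complex matrices indexed by the symmetric group `Equiv.Perm (Fin n)`. -/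
abbrev PermMatrix (n : ℕ) := Matrix (Equiv.Perm (Fin n)) (Equiv.Perm (Fin n)) ℂ

/-- The set of inversions `I(g) = {(a,b) : a < b and g(a) > g(b)}` of a permutation. -/
def invSet {n : ℕ} (g : Equiv.Perm (Fin n)) : Finset (Fin n × Fin n) :=
  Finset.univ.filter fun p => p.1 < p.2 ∧ g p.2 < g p.1

/-- The matrix `M_q(g)`, with `(σ,τ)`-entry `∏_{(a,b) ∈ I(g)} q (τ b) (τ a)`
if `σ = τ ∘ g⁻¹` and `0` otherwise. -/
def twistMat (n : ℕ) (q : Fin n → Fin n → ℂ) (g : Equiv.Perm (Fin n)) : PermMatrix n :=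
  fun σ τ => if σ = τ * g⁻¹ then ∏ p ∈ invSet g, q (τ p.2) (τ p.1) else 0

/-- `IsTCycle a b s` says that `s` is the cycle `t_{b,a}` (for `a ≤ b`):
`s i = i + 1` for `a ≤ i ≤ b - 1`, `s b = a`, and `s i = i` otherwise
(in particular `t_{b,b} = id`). -/
def IsTCycle {n : ℕ} (a b : Fin n) (s : Equiv.Perm (Fin n)) : Prop :=
  (∀ i : Fin n, a ≤ i → i < b → (s i : ℕ) = (i : ℕ) + 1) ∧ s b = a ∧
    ∀ i : Fin n, ¬(a ≤ i ∧ i ≤ b) → s i = i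

/-!
Let `G_c` be the set of permutations fixing every `i < c`. Each `g ∈ G_k` factors uniquely as
`g' * t_{m,k}` with `g' ∈ G_{k+1}` and `m = g⁻¹ k`. Every inversion of `t_{m,k}⁻¹` has first
entry `k`, while those of `g'` have first entry `> k`; so the inversion set of `g' * t_{m,k}` is
the disjoint union of that of `t_{m,k}` and a transport of that of `g'`, which gives
`M_q(g') M_q(t_{m,k}) = M_q(g)`. Hence `(∑_{G_{k+1}} M_q) F_k = ∑_{G_k} M_q`, and descending
from `G_n = {1}` to `G_0 = S_n` yields the product.
-/

open Equiv Finset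

variable {n : ℕ}

section invSet

variable {g h : Perm (Fin n)}

lemma mem_invSet {p : Fin n × Fin n} : p ∈ invSet g ↔ p.1 < p.2 ∧ g p.2 < g p.1 := by
  simp [invSet]

lemma mem_invSet_inv {p : Fin n × Fin n} : p ∈ invSet g⁻¹ ↔ (g⁻¹ p.2, g⁻¹ p.1) ∈ invSet g := by
  simp [mem_invSet, and_comm]

lemma invSet_one : invSet (1 : Perm (Fin n)) = ∅ := by
  ext p
  simp only [mem_invSet, Perm.one_apply, notMem_empty, iff_false, not_and, not_lt]
  exact le_of_lt

lemma mem_map_invSet {p : Fin n × Fin n} :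
    p ∈ (invSet g).map (h.prodCongr h).symm.toEmbedding ↔ (h p.1, h p.2) ∈ invSet g := by
  rw [mem_map_equiv]
  rfl

lemma disjoint_invSet_map_invSet :
    Disjoint (invSet h) ((invSet g).map (h.prodCongr h).symm.toEmbedding) :=
  disjoint_left.2 fun _ hh hg => lt_asymm (mem_invSet.1 hh).2 (mem_invSet.1 (mem_map_invSet.1 hg)).1

lemma invSet_mul (hgh : Disjoint (invSet g) (invSet h⁻¹)) :
    invSet (g * h) = invSet h ∪ (invSet g).map (h.prodCongr h).symm.toEmbedding := by
  ext ⟨a, b⟩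
  simp only [mem_union, mem_map_invSet, mem_invSet, Perm.mul_apply]
  constructor
  · rintro ⟨hab, hgab⟩
    rcases lt_or_gt_of_ne (h.injective.ne hab.ne) with hlt | hgt
    · exact Or.inr ⟨hlt, hgab⟩
    · exact Or.inl ⟨hab, hgt⟩
  · have hinv : ∀ {c d : Fin n}, c < d → h⁻¹ d < h⁻¹ c → (c, d) ∉ invSet g := fun hcd hdc =>
      disjoint_right.1 hgh (mem_invSet.2 ⟨hcd, hdc⟩)
    rintro (⟨hab, hba⟩ | ⟨hab, hgba⟩)
    · refine ⟨hab, lt_of_le_of_ne (not_lt.1 fun hlt => hinv hba (by simpa using hab)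
        (mem_invSet.2 ⟨hba, hlt⟩)) (g.injective.ne (h.injective.ne hab.ne'))⟩
    · refine ⟨lt_of_le_of_ne (not_lt.1 fun hba => hinv hab (by simpa using hba)
        (mem_invSet.2 ⟨hab, hgba⟩)) (ne_of_apply_ne h hab.ne), hgba⟩

end invSet

section twistMat

variable (q : Fin n → Fin n → ℂ)

lemma twistMat_one : twistMat n q 1 = 1 := by
  ext σ τ
  simp [twistMat, invSet_one, Matrix.one_apply]

lemma twistMat_mul {g h : Perm (Fin n)} (hgh : Disjoint (invSet g) (invSet h⁻¹)) :
    twistMat n q g * twistMat n q h = twistMat n q (g * h) := by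
  ext σ τ
  rw [Matrix.mul_apply, Fintype.sum_eq_single (τ * h⁻¹) fun ρ hρ => by simp [twistMat, hρ]]
  simp only [twistMat, mul_inv_rev, ← mul_assoc]
  split_ifs
  · rw [invSet_mul hgh, prod_union disjoint_invSet_map_invSet, prod_map, mul_comm]
    rfl
  · exact zero_mul _

end twistMat

section IsTCycle

variable {k m : Fin n} {s : Perm (Fin n)}

lemma IsTCycle.val_apply (hs : IsTCycle k m s) (i : Fin n) :
    (s i : ℕ) =
      if (i : ℕ) < k ∨ (m : ℕ) < i then (i : ℕ) else if (i : ℕ) < m then (i : ℕ) + 1 else (k : ℕ) := by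
  split_ifs with hout hlt
  · exact congrArg Fin.val (hs.2.2 i fun hi => by omega)
  · exact hs.1 i (by omega) hlt
  · rw [show i = m by omega, hs.2.1]

lemma IsTCycle.apply_of_lt (hs : IsTCycle k m s) {i : Fin n} (hi : i < k) : s i = i :=
  hs.2.2 i fun h => (h.1.trans_lt hi).false

lemma IsTCycle.inv_apply_left (hs : IsTCycle k m s) : s⁻¹ k = m :=
  Perm.inv_eq_iff_eq.2 hs.2.1.symm

lemma IsTCycle.snd_eq_of_mem_invSet (hs : IsTCycle k m s) {p : Fin n × Fin n}
    (hp : p ∈ invSet s) : p.2 = m := by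
  obtain ⟨hlt, hinv⟩ := mem_invSet.1 hp
  have h1 := hs.val_apply p.1
  have h2 := hs.val_apply p.2
  rw [Fin.lt_def] at hlt hinv
  ext
  split_ifs at h1 h2 <;> omega

lemma IsTCycle.fst_eq_of_mem_invSet_inv (hs : IsTCycle k m s) {p : Fin n × Fin n}
    (hp : p ∈ invSet s⁻¹) : p.1 = k := by
  have := hs.snd_eq_of_mem_invSet (mem_invSet_inv.1 hp)
  rw [← hs.2.1, ← this]
  simp

end IsTCycle

section fixBelow

def fixBelow (n c : ℕ) : Finset (Perm (Fin n)) :=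
  {g | ∀ i : Fin n, (i : ℕ) < c → g i = i}

variable {c : ℕ} {g : Perm (Fin n)}

lemma mem_fixBelow : g ∈ fixBelow n c ↔ ∀ i : Fin n, (i : ℕ) < c → g i = i := by
  simp [fixBelow]

lemma fixBelow_zero : fixBelow n 0 = univ := by
  ext g
  simp [mem_fixBelow]

lemma fixBelow_self : fixBelow n n = {1} := by
  ext g
  simp only [mem_fixBelow, mem_singleton, Perm.ext_iff, Perm.one_apply]
  exact ⟨fun h i => h i i.isLt, fun h i _ => h i⟩

lemma mem_fixBelow_succ {k : Fin n} :
    g ∈ fixBelow n (k + 1) ↔ g ∈ fixBelow n k ∧ g k = k := by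
  simp only [mem_fixBelow]
  refine ⟨fun h => ⟨fun i hi => h i (by omega), h k (by omega)⟩, fun ⟨h, hk⟩ i hi => ?_⟩
  rcases Nat.lt_succ_iff_lt_or_eq.1 hi with hi | hi
  · exact h i hi
  · rwa [Fin.ext hi]

lemma inv_apply_of_mem_fixBelow (hg : g ∈ fixBelow n c) {i : Fin n} (hi : (i : ℕ) < c) :
    g⁻¹ i = i :=
  Perm.inv_eq_iff_eq.2 (mem_fixBelow.1 hg i hi).symm

lemma le_fst_of_mem_invSet (hg : g ∈ fixBelow n c) {p : Fin n × Fin n} (hp : p ∈ invSet g) :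
    c ≤ p.1 := by
  obtain ⟨hlt, hinv⟩ := mem_invSet.1 hp
  by_contra! hc
  rw [mem_fixBelow.1 hg _ hc] at hinv
  have hfix : p.2 = g p.2 := by
    simpa using inv_apply_of_mem_fixBelow hg (i := g p.2) (by rw [Fin.lt_def] at hinv; omega)
  rw [← hfix] at hinv
  exact lt_asymm hlt hinv

lemma le_inv_apply_of_mem_fixBelow {k : Fin n} (hg : g ∈ fixBelow n k) : k ≤ g⁻¹ k := by
  by_contra! h
  have := mem_fixBelow.1 hg _ h
  exact h.ne' (by simpa using this)

end fixBelow

section factorization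

variable (q : Fin n → Fin n → ℂ) (t : Fin n → Fin n → Perm (Fin n))

/-- The factor `F_k = ∑_{m ≥ k} M_q(t_{m,k})`. -/
def cycleSum (k : Fin n) : PermMatrix n :=
  ∑ m ∈ Ici k, twistMat n q (t m k)

variable {t} (ht : ∀ a b : Fin n, a ≤ b → IsTCycle a b (t b a))
include ht

lemma mul_tCycle_mem_fixBelow {k m : Fin n} {g : Perm (Fin n)} (hg : g ∈ fixBelow n (k + 1))
    (hkm : k ≤ m) : g * t m k ∈ fixBelow n k :=
  mem_fixBelow.2 fun i hi => by
    rw [Perm.mul_apply, (ht k m hkm).apply_of_lt hi, mem_fixBelow.1 hg i (by omega)]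

lemma mul_inv_tCycle_mem_fixBelow {k : Fin n} {g : Perm (Fin n)} (hg : g ∈ fixBelow n k) :
    g * (t (g⁻¹ k) k)⁻¹ ∈ fixBelow n (k + 1) := by
  have hs := ht k _ (le_inv_apply_of_mem_fixBelow hg)
  refine mem_fixBelow_succ.2 ⟨mem_fixBelow.2 fun i hi => ?_, ?_⟩
  · rw [Perm.mul_apply, Perm.inv_eq_iff_eq.2 (hs.apply_of_lt hi).symm, mem_fixBelow.1 hg i hi]
  · rw [Perm.mul_apply, hs.inv_apply_left]
    simp

lemma twistMat_mul_tCycle {k m : Fin n} {g : Perm (Fin n)} (hg : g ∈ fixBelow n (k + 1))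
    (hkm : k ≤ m) : twistMat n q g * twistMat n q (t m k) = twistMat n q (g * t m k) :=
  twistMat_mul q <| disjoint_left.2 fun p hpg hpt => by
    have := le_fst_of_mem_invSet hg hpg
    rw [(ht k m hkm).fst_eq_of_mem_invSet_inv hpt] at this
    omega

lemma sum_fixBelow_succ_mul_cycleSum (k : Fin n) :
    (∑ g ∈ fixBelow n (k + 1), twistMat n q g) * cycleSum q t k =
      ∑ g ∈ fixBelow n k, twistMat n q g := by
  rw [cycleSum, sum_mul_sum, ← sum_product']
  refine sum_nbij' (fun p => p.1 * t p.2 k) (fun g => (g * (t (g⁻¹ k) k)⁻¹, g⁻¹ k))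
    ?_ ?_ ?_ ?_ ?_
  · rintro ⟨g, m⟩ hp
    rw [mem_product, mem_Ici] at hp
    exact mul_tCycle_mem_fixBelow ht hp.1 hp.2
  · intro g hg
    exact mem_product.2
      ⟨mul_inv_tCycle_mem_fixBelow ht hg, mem_Ici.2 (le_inv_apply_of_mem_fixBelow hg)⟩
  · rintro ⟨g, m⟩ hp
    rw [mem_product, mem_Ici] at hp
    have : (g * t m k)⁻¹ k = m := by
      rw [mul_inv_rev, Perm.mul_apply, inv_apply_of_mem_fixBelow hp.1 (by omega),
        (ht k m hp.2).inv_apply_left]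
    rw [this, mul_inv_cancel_right]
  · intro g _
    simp
  · rintro ⟨g, m⟩ hp
    rw [mem_product, mem_Ici] at hp
    exact twistMat_mul_tCycle q ht hp.1 hp.2

lemma sum_fixBelow_eq_prod {c : ℕ} (hc : c ≤ n) :
    ∑ g ∈ fixBelow n c, twistMat n q g =
      (((List.finRange n).drop c).reverse.map (cycleSum q t)).prod := by
  induction hc using Nat.decreasingInduction with
  | self => simp [fixBelow_self, twistMat_one, List.drop_eq_nil_of_le]
  | of_succ c hc ih =>
    rw [List.drop_eq_getElem_cons (by simpa using hc), List.reverse_cons, List.map_append,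
      List.prod_append, ← ih, List.getElem_finRange]
    simpa using (sum_fixBelow_succ_mul_cycleSum q ht ⟨c, hc⟩).symm

end factorization

theorem sum_twistMat_factorization_general (n : ℕ) (q : Fin n → Fin n → ℂ)
    (t : Fin n → Fin n → Equiv.Perm (Fin n))
    (ht : ∀ a b : Fin n, a ≤ b → IsTCycle a b (t b a)) :
    (∑ g : Equiv.Perm (Fin n), twistMat n q g) =
      ((List.finRange n).reverse.map fun k =>
        ∑ m ∈ Finset.Ici k, twistMat n q (t m k)).prod := by
  have := sum_fixBelow_eq_prod q ht (Nat.zero_le n)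
  rwa [fixBelow_zero, List.drop_zero] at this

/-- The matrix form of the factorization `α*_n = β*_1 · β*_2 ⋯ β*_n` in `A(S_n)`:
with `F_k := ∑_{m=k}^{n} M_q(t_{m,k})`, the sum of the matrices `M_q(g)` over all
permutations factors as the ordered product `∑_{g ∈ S_n} M_q(g) = F_n · F_{n-1} ⋯ F_1`,
the factor `F_k` standing to the left of `F_k'` whenever `k > k'`. -/
theorem sum_twistMat_factorization (n : ℕ) (hn : 1 ≤ n) (q : Fin n → Fin n → ℂ)
    (t : Fin n → Fin n → Equiv.Perm (Fin n))
    (ht : ∀ a b : Fin n, a ≤ b → IsTCycle a b (t b a)) :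
    (∑ g : Equiv.Perm (Fin n), twistMat n q g) =
      ((List.finRange n).reverse.map fun k =>
        ∑ m ∈ Finset.Ici k, twistMat n q (t m k)).prod :=
  sum_twistMat_factorization_general n q t ht
end

section
/- For all a < b in Fin n with a ≥ 2, the (b−a+1)-st power of the matrix D_{a-1}·M_q(t_{b,a}) is the diagonal matrix whose diagonal entry at τ ∈ S_n equals σ_T, where T = {τ(a−1), τ(a), …, τ(b)} is the image under τ of the interval [a−1,b]. -/
/-- The successor `a + 1` in `Fin n` (computed mod `n`; in all uses below one has
`a + 1 < n`, so no wraparound occurs). -/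
def finSucc {n : ℕ} (a : Fin n) : Fin n :=
  ⟨((a : ℕ) + 1) % n, Nat.mod_lt _ a.pos⟩

/-- The diagonal matrix `D_a = M_q(t_{a+1,a})²` whose diagonal entry at `τ` is
`q (τ a) (τ (a+1)) · q (τ (a+1)) (τ a)`. -/
def Dmat (n : ℕ) (q : Fin n → Fin n → ℂ) (a : Fin n) : PermMatrix n :=
  Matrix.diagonal fun τ => q (τ a) (τ (finSucc a)) * q (τ (finSucc a)) (τ a)

/-- `σ_T = ∏_{i,j ∈ T, i ≠ j} q i j`, the product over all ordered pairs of distinct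
elements of `T`. -/
def sigmaT {n : ℕ} (q : Fin n → Fin n → ℂ) (T : Finset (Fin n)) : ℂ :=
  ∏ p ∈ (T ×ˢ T).filter fun p => p.1 ≠ p.2, q p.1 p.2

/-- The predecessor `a - 1` in `Fin n` (truncated at `0`; in all uses below one has
`1 ≤ a`, so it is the genuine predecessor). -/
def finPred {n : ℕ} (a : Fin n) : Fin n :=
  ⟨(a : ℕ) - 1, lt_of_le_of_lt (Nat.sub_le _ _) a.isLt⟩

/-! `D_{a-1}` and `M_q(t_{b,a})` are both monomial matrices for the right-regular action of `S_n`
on itself, so `A = D_{a-1} M_q(s)` (with `s = t_{b,a}`) maps `τ` to `τ s⁻¹` with some weight, and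
`A^k` is monomial with the product of the weights along `τ, τ s⁻¹, …, τ s⁻⁽ᵏ⁻¹⁾`. Since `s` is a
`(b-a+1)`-cycle, `A^(b-a+1)` is diagonal. The inversions of `s` are the pairs `(x, b)` with
`a ≤ x < b`, so the `j`-th weight is `q(τc,τz) q(τz,τc) ∏_{y ∈ [a,b], y ≠ z} q(τz,τy)` with
`c = a-1` and `z = s⁻ʲ(b) = b-j`; as `z` runs through `[a,b]` these multiply up to `σ_{τ[c,b]}`. -/

section ShiftMatrix

variable {G R : Type*} [Group G] [DecidableEq G] [CommSemiring R]

def shiftMatrix (g : G) (f : G → R) : Matrix G G R :=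
  fun σ τ => if σ = τ * g then f τ else 0

theorem shiftMatrix_one (f : G → R) : shiftMatrix 1 f = Matrix.diagonal f := by
  ext σ τ
  rw [shiftMatrix, mul_one, Matrix.diagonal_apply]
  split_ifs with h <;> simp [h]

variable [Fintype G]

theorem diagonal_mul_shiftMatrix (d : G → R) (g : G) (f : G → R) :
    Matrix.diagonal d * shiftMatrix g f = shiftMatrix g fun τ => d (τ * g) * f τ := by
  ext σ τ
  simp only [Matrix.diagonal_mul, shiftMatrix]
  split_ifs with h
  · rw [h]
  · exact mul_zero _

theorem shiftMatrix_mul_shiftMatrix (g h : G) (f k : G → R) :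
    shiftMatrix g f * shiftMatrix h k = shiftMatrix (h * g) fun τ => f (τ * h) * k τ := by
  ext σ τ
  simp [shiftMatrix, Matrix.mul_apply, ← mul_assoc]

theorem shiftMatrix_pow (g : G) (f : G → R) (m : ℕ) :
    shiftMatrix g f ^ m = shiftMatrix (g ^ m) fun τ => ∏ j ∈ Finset.range m, f (τ * g ^ j) := by
  induction m with
  | zero => simp [shiftMatrix_one]
  | succ m ih =>
    rw [pow_succ, ih, shiftMatrix_mul_shiftMatrix, ← pow_succ']
    congr! 2 with τ
    simp only [Finset.prod_range_succ', pow_zero, mul_one, mul_assoc, ← pow_succ']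

end ShiftMatrix

namespace IsTCycle

variable {n : ℕ} {a b : Fin n} {s : Equiv.Perm (Fin n)}

theorem inv_apply_of_notMem (hs : IsTCycle a b s) {i : Fin n} (hi : ¬(a ≤ i ∧ i ≤ b)) :
    s⁻¹ i = i := by
  rw [Equiv.Perm.inv_eq_iff_eq, hs.2.2 i hi]

theorem pow_apply_val (hs : IsTCycle a b s) {i : Fin n} (hai : a ≤ i) :
    ∀ {j : ℕ}, (i : ℕ) + j ≤ b → ((s ^ j) i : ℕ) = i + j
  | 0, _ => rfl
  | j + 1, hj => by
    have hval := hs.pow_apply_val hai (j := j) (by omega)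
    rw [pow_succ', Equiv.Perm.mul_apply,
      hs.1 _ (Fin.le_def.2 (by omega)) (Fin.lt_def.2 (by omega)), hval, add_assoc]

theorem inv_pow_apply_right_val (hs : IsTCycle a b s) (hab : a ≤ b) {j : ℕ}
    (hj : j ≤ (b : ℕ) - a) : ((s⁻¹ ^ j) b : ℕ) = b - j := by
  have hab' := Fin.le_def.1 hab
  have hb : (s ^ j) ⟨b - j, by omega⟩ = b := by
    refine Fin.ext ?_
    rw [hs.pow_apply_val (Fin.le_def.2 (by dsimp only; omega)) (by dsimp only; omega)]
    dsimp only
    omega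
  rw [inv_pow, Equiv.Perm.inv_eq_iff_eq.2 hb.symm]

theorem pow_eq_one (hs : IsTCycle a b s) (hab : a ≤ b) : s ^ ((b : ℕ) - a + 1) = 1 := by
  refine Equiv.ext fun i => ?_
  by_cases hi : a ≤ i ∧ i ≤ b
  · obtain ⟨hai, hib⟩ := Fin.le_def.1 hi.1, Fin.le_def.1 hi.2
    have hbi : (s ^ ((b : ℕ) - i)) i = b :=
      Fin.ext (by rw [hs.pow_apply_val hi.1 (by omega)]; omega)
    have hai' : (s ^ ((i : ℕ) - a)) a = i :=
      Fin.ext (by rw [hs.pow_apply_val le_rfl (by omega)]; omega)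
    rw [show (b : ℕ) - a + 1 = (i - a) + (1 + (b - i)) by omega, pow_add, pow_add, pow_one,
      Equiv.Perm.mul_apply, Equiv.Perm.mul_apply, hbi, hs.2.1, hai', Equiv.Perm.one_apply]
  · exact Equiv.Perm.pow_apply_eq_self_of_apply_eq_self (hs.2.2 i hi) _

theorem invSet_eq_image_Ico (hs : IsTCycle a b s) (hab : a ≤ b) :
    invSet s = (Finset.Ico a b).image fun x => (x, b) := by
  have hval : ∀ i : Fin n, (s i : ℕ) =
      if (i : ℕ) < a then (i : ℕ) else if (i : ℕ) < b then (i : ℕ) + 1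
        else if (i : ℕ) = b then (a : ℕ) else (i : ℕ) := by
    intro i
    split_ifs with h₁ h₂ h₃
    · rw [hs.2.2 i (by simp only [Fin.le_def]; omega)]
    · exact hs.1 i (Fin.le_def.2 (by omega)) h₂
    · rw [Fin.ext h₃, hs.2.1]
    · rw [hs.2.2 i (by simp only [Fin.le_def]; omega)]
  ext ⟨x, y⟩
  have hx := hval x
  have hy := hval y
  have hab' := Fin.le_def.1 hab
  simp only [invSet, Finset.mem_filter, Finset.mem_univ, true_and, Finset.mem_image,
    Finset.mem_Ico, Prod.mk.injEq, Fin.lt_def, Fin.le_def]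
  constructor
  · rintro ⟨hxy, hinv⟩
    refine ⟨x, ⟨?_, ?_⟩, rfl, Fin.ext ?_⟩ <;> split_ifs at hx hy <;> omega
  · rintro ⟨x, ⟨hax, hxb⟩, rfl, rfl⟩
    split_ifs at hx hy <;> omega

theorem image_Ico_inv_pow (hs : IsTCycle a b s) (j : ℕ) :
    (Finset.Ico a b).image ⇑(s⁻¹ ^ j) = (Finset.Icc a b).erase ((s⁻¹ ^ j) b) := by
  have hsupp : {x | (s⁻¹ ^ j) x ≠ x} ⊆ Finset.Icc a b := fun x hx => by
    by_contra h
    exact hx (Equiv.Perm.pow_apply_eq_self_of_apply_eq_self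
      (hs.inv_apply_of_notMem (by simpa using h)) j)
  have himage : (Finset.Icc a b).image ⇑(s⁻¹ ^ j) = Finset.Icc a b := by
    simpa [Finset.map_eq_image] using Finset.map_perm hsupp
  rw [← Finset.Icc_erase_right, Finset.image_erase (Equiv.injective _), himage]

theorem prod_invSet_inv_pow {M : Type*} [CommMonoid M] (hs : IsTCycle a b s) (hab : a ≤ b)
    (f : Fin n → Fin n → M) (j : ℕ) :
    ∏ p ∈ invSet s, f ((s⁻¹ ^ j) p.2) ((s⁻¹ ^ j) p.1) =
      ∏ y ∈ (Finset.Icc a b).erase ((s⁻¹ ^ j) b), f ((s⁻¹ ^ j) b) y := by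
  rw [hs.invSet_eq_image_Ico hab, Finset.prod_image fun x _ y _ h => (Prod.ext_iff.1 h).1,
    ← hs.image_Ico_inv_pow, Finset.prod_image fun x _ y _ h => Equiv.injective _ h]

theorem prod_range_inv_pow_apply_right {M : Type*} [CommMonoid M] (hs : IsTCycle a b s)
    (hab : a ≤ b) (f : Fin n → M) :
    ∏ j ∈ Finset.range ((b : ℕ) - a + 1), f ((s⁻¹ ^ j) b) = ∏ z ∈ Finset.Icc a b, f z := by
  have hab' := Fin.le_def.1 hab
  refine Finset.prod_nbij' (fun j => (s⁻¹ ^ j) b) (fun z => (b : ℕ) - z) ?_ ?_ ?_ ?_ fun _ _ => rfl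
  · intro j hj
    simp only [Finset.mem_range] at hj
    rw [Finset.mem_Icc, Fin.le_def, Fin.le_def, hs.inv_pow_apply_right_val hab (j := j) (by omega)]
    omega
  · intro z hz
    simp only [Finset.mem_Icc, Fin.le_def] at hz
    simp only [Finset.mem_range]
    omega
  · intro j hj
    simp only [Finset.mem_range] at hj
    rw [hs.inv_pow_apply_right_val hab (j := j) (by omega)]
    omega
  · intro z hz
    simp only [Finset.mem_Icc, Fin.le_def] at hz
    exact Fin.ext (by rw [hs.inv_pow_apply_right_val hab (by omega)]; omega)

end IsTCycle

section SigmaT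

variable {n : ℕ} (q : Fin n → Fin n → ℂ)

theorem sigmaT_eq_prod_prod_erase (T : Finset (Fin n)) :
    sigmaT q T = ∏ x ∈ T, ∏ y ∈ T.erase x, q x y := by
  rw [sigmaT, Finset.prod_filter, Finset.prod_product]
  refine Finset.prod_congr rfl fun x _ => ?_
  rw [← Finset.prod_filter, Finset.filter_ne]

theorem sigmaT_image {f : Fin n → Fin n} (hf : Function.Injective f) (S : Finset (Fin n)) :
    sigmaT q (S.image f) = ∏ x ∈ S, ∏ y ∈ S.erase x, q (f x) (f y) := by
  rw [sigmaT_eq_prod_prod_erase, Finset.prod_image hf.injOn]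
  refine Finset.prod_congr rfl fun x _ => ?_
  rw [← Finset.image_erase hf, Finset.prod_image hf.injOn]

theorem sigmaT_image_insert {f : Fin n → Fin n} (hf : Function.Injective f) {c : Fin n}
    {S : Finset (Fin n)} (hc : c ∉ S) :
    sigmaT q ((insert c S).image f) =
      ∏ z ∈ S, q (f c) (f z) * q (f z) (f c) * ∏ y ∈ S.erase z, q (f z) (f y) := by
  rw [sigmaT_image q hf, Finset.prod_insert hc, Finset.erase_insert hc, ← Finset.prod_mul_distrib]
  refine Finset.prod_congr rfl fun z hz => ?_
  rw [Finset.erase_insert_of_ne (ne_of_mem_of_not_mem hz hc).symm,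
    Finset.prod_insert fun h => hc (Finset.mem_of_mem_erase h), mul_assoc]

end SigmaT

theorem Dmat_mul_twistMat_pow_cycle_general (n : ℕ) (q : Fin n → Fin n → ℂ)
    (a b : Fin n) (hab : a < b) (ha : 1 ≤ (a : ℕ))
    (s : Equiv.Perm (Fin n)) (hs : IsTCycle a b s) :
    (Dmat n q (finPred a) * twistMat n q s) ^ ((b : ℕ) - (a : ℕ) + 1) =
      Matrix.diagonal fun τ : Equiv.Perm (Fin n) =>
        sigmaT q ((Finset.Icc (finPred a) b).image τ) := by
  set c := finPred a
  have hca : (c : ℕ) + 1 = a := Nat.sub_add_cancel ha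
  have hsucc : finSucc c = a := Fin.ext (by simp only [finSucc, hca, Nat.mod_eq_of_lt a.isLt])
  have hc : ¬(a ≤ c ∧ c ≤ b) := by simp only [Fin.le_def]; omega
  have hIcc : Finset.Icc c b = insert c (Finset.Icc a b) := by
    ext x
    simp only [Finset.mem_Icc, Finset.mem_insert, Fin.le_def, Fin.ext_iff]
    omega
  have htwist : twistMat n q s = shiftMatrix s⁻¹ fun τ => ∏ p ∈ invSet s, q (τ p.2) (τ p.1) := rfl
  rw [Dmat, hsucc, htwist, diagonal_mul_shiftMatrix, shiftMatrix_pow, inv_pow s,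
    hs.pow_eq_one hab.le, inv_one, shiftMatrix_one]
  congr 1
  funext τ
  rw [hIcc, sigmaT_image_insert q τ.injective (by simpa using hc),
    ← hs.prod_range_inv_pow_apply_right hab.le]
  refine Finset.prod_congr rfl fun j _ => ?_
  have hfix : (s⁻¹ ^ (j + 1)) c = c :=
    Equiv.Perm.pow_apply_eq_self_of_apply_eq_self (hs.inv_apply_of_notMem hc) _
  have hleft : (s⁻¹ ^ (j + 1)) a = (s⁻¹ ^ j) b := by
    rw [pow_succ, Equiv.Perm.mul_apply, Equiv.Perm.inv_eq_iff_eq.2 hs.2.1.symm]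
  rw [mul_assoc τ, ← pow_succ, Equiv.Perm.coe_mul, Function.comp_apply, Function.comp_apply,
    hfix, hleft]
  exact congrArg _ (hs.prod_invSet_inv_pow hab.le (fun x y => q (τ x) (τ y)) j)

/-- For `a < b` in `Fin n` with `a ≥ 2` (so `a ≥ 1` in 0-indexed terms), the
`(b−a+1)`-st power of `D_{a-1} · M_q(t_{b,a})` is the diagonal matrix whose diagonal
entry at `τ` equals `σ_T`, where `T = τ([a−1,b])` is the image under `τ` of the
interval `[a−1,b]`. -/
theorem Dmat_mul_twistMat_pow_cycle (n : ℕ) (hn : 1 ≤ n) (q : Fin n → Fin n → ℂ)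
    (a b : Fin n) (hab : a < b) (ha : 1 ≤ (a : ℕ))
    (s : Equiv.Perm (Fin n)) (hs : IsTCycle a b s) :
    (Dmat n q (finPred a) * twistMat n q s) ^ ((b : ℕ) - (a : ℕ) + 1) =
      Matrix.diagonal fun τ : Equiv.Perm (Fin n) =>
        sigmaT q ((Finset.Icc (finPred a) b).image τ) :=
  Dmat_mul_twistMat_pow_cycle_general n q a b hab ha s hs
end

section
/- For all a < b in Fin n, the determinant of I − M_q(t_{b,a}) factors as det(I − M_q(t_{b,a})) = ∏_{T} (1 − σ_T)^{(b−a)!·(n−b+a−1)!}, where the product runs over all subsets T ⊆ Fin n of cardinality b−a+1. -/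
/-!
`M_q(t)` is the permutation matrix of `τ ↦ τ * t` weighted by `d τ = ∏_{(x,y) ∈ I(t)} q(τ y, τ x)`,
where `t = t_{b,a}` is an `m`-cycle, `m = b - a + 1`. The left cosets `c = τ⟨t⟩` are the cycles of
`τ ↦ τ * t`, so `I - M_q(t)` is block diagonal with one block per coset, and a weighted `m`-cycle
`P` has `det (1 - P) = 1 - ∏ (weights)`. The inversions of `t` are the pairs `(x, b)` with
`a ≤ x < b`; as `k` runs over a period, `(t^k b, t^k x)` runs over all ordered pairs of distinct
points of `[a, b]`, so the weights of the coset multiply to `σ_{τ [a, b]}`. Finally an `m`-subset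
`T` is `τ [a, b]` for `m! (n - m)!` permutations `τ`, i.e. for `(m - 1)! (n - m)!` cosets.
-/

open Equiv Finset Matrix
open scoped Nat

namespace Equiv.Perm

variable {α M : Type*} [Fintype α] [DecidableEq α] [CommMonoid M] {σ : Perm α} {b : α}

theorem IsCycle.eq_one_or_eq_of_forall_apply_eq_or_eq {ρ : Perm α} (hρ : ρ.IsCycle)
    (hsupp : ρ.support = univ) (h : ∀ x, σ x = x ∨ σ x = ρ x) : σ = 1 ∨ σ = ρ := by
  have hfix (x : α) : ρ x ≠ x := mem_support.mp (hsupp ▸ mem_univ x)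
  by_cases hσ : σ = 1
  · exact Or.inl hσ
  right
  obtain ⟨j, hj⟩ : ∃ j, σ j ≠ j := by
    by_contra! hc
    exact hσ (Equiv.ext hc)
  -- `σ` cannot fix `ρ x` once it sends `x` to `ρ x`, by injectivity
  have hpow (k : ℕ) : σ ((ρ ^ k) j) = ρ ((ρ ^ k) j) := by
    induction k with
    | zero => exact (h j).resolve_left hj
    | succ k ih =>
      rw [pow_succ', Perm.mul_apply]
      refine (h _).resolve_left fun hfixed => hfix ((ρ ^ k) j) (σ.injective ?_)
      rw [hfixed, ih]
  ext x
  obtain ⟨k, -, rfl⟩ := (hρ.sameCycle (hfix j) (hfix x)).exists_nat_pow_eq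
  exact hpow k

theorem image_pow_support (σ : Perm α) (k : ℕ) : σ.support.image ⇑(σ ^ k) = σ.support :=
  eq_of_subset_of_card_le (image_subset_iff.mpr fun _ hx => pow_apply_mem_support.mpr hx)
    (card_image_of_injective _ (σ ^ k).injective).ge

theorem IsCycle.prod_pow_apply (hσ : σ.IsCycle) (hb : b ∈ σ.support) (F : α → M) :
    ∏ i : Fin (orderOf σ), F ((σ ^ (i : ℕ)) b) = ∏ u ∈ σ.support, F u := by
  have hcyc : σ.IsCycleOn (σ.support : Set α) := by
    rw [coe_support_eq_set_support]; exact hσ.isCycleOn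
  rw [Fin.prod_univ_eq_prod_range (fun i => F ((σ ^ i) b)), hσ.orderOf]
  refine prod_nbij (fun i => (σ ^ i) b) (fun i _ => pow_apply_mem_support.mpr hb)
    (fun i hi j hj hij => ?_) (fun u hu => ?_) fun _ _ => rfl
  · exact ((hcyc.pow_apply_eq_pow_apply hb).mp hij).eq_of_lt_of_lt
      (mem_range.mp hi) (mem_range.mp hj)
  · obtain ⟨k, hk, rfl⟩ := hcyc.exists_pow_eq hb hu
    exact ⟨k, mem_range.mpr hk, rfl⟩

theorem IsCycle.prod_pow_apply_prod_erase (hσ : σ.IsCycle) (hb : b ∈ σ.support)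
    (f : α → α → M) :
    ∏ i : Fin (orderOf σ), ∏ x ∈ σ.support.erase b, f ((σ ^ (i : ℕ)) b) ((σ ^ (i : ℕ)) x) =
      ∏ u ∈ σ.support, ∏ v ∈ σ.support.erase u, f u v := by
  rw [← hσ.prod_pow_apply hb]
  refine prod_congr rfl fun i _ => prod_equiv (σ ^ (i : ℕ)) (fun x => ?_) fun _ _ => rfl
  simp

end Equiv.Perm

section WeightedPermMatrix

variable {ι κ K R : Type*} [Fintype ι] [DecidableEq ι] [Fintype κ] [DecidableEq κ]
  [Fintype K] [DecidableEq K] [CommRing R]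

def weightedPermMatrix (π : Perm ι) (w : ι → R) : Matrix ι ι R :=
  Matrix.of fun i j => if j = π i then w j else 0

theorem det_one_sub_weightedPermMatrix_of_isCycle {ρ : Perm ι} (hρ : ρ.IsCycle)
    (hsupp : ρ.support = univ) (c : ι → R) :
    (1 - weightedPermMatrix ρ c).det = 1 - ∏ i, c i := by
  have hfix (x : ι) : ρ x ≠ x := Perm.mem_support.mp (hsupp ▸ mem_univ x)
  have hentry (i j : ι) : (1 - weightedPermMatrix ρ c)ᵀ j i =
      (if i = j then 1 else 0) - if j = ρ i then c j else 0 := by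
    simp [weightedPermMatrix, Matrix.one_apply]
  have hvanish (σ : Perm ι) (hσ : σ ∉ ({1, ρ} : Finset (Perm ι))) :
      Perm.sign σ • ∏ i, (1 - weightedPermMatrix ρ c)ᵀ (σ i) i = 0 := by
    obtain ⟨i, hi1, hiρ⟩ : ∃ i, σ i ≠ i ∧ σ i ≠ ρ i := by
      by_contra! h
      rcases hρ.eq_one_or_eq_of_forall_apply_eq_or_eq hsupp
        fun x => or_iff_not_imp_left.mpr (h x) with rfl | rfl <;> simp at hσ
    rw [prod_eq_zero (mem_univ i) (by rw [hentry]; simp [Ne.symm hi1, hiρ]), smul_zero]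
  rw [← det_transpose, det_apply, ← sum_subset (subset_univ _) fun σ _ => hvanish σ,
    sum_pair hρ.ne_one.symm]
  have hid : ∏ i, (1 - weightedPermMatrix ρ c)ᵀ ((1 : Perm ι) i) i = 1 :=
    prod_eq_one fun i _ => by rw [Perm.one_apply, hentry]; simp [Ne.symm (hfix i)]
  have hcyc : ∏ i, (1 - weightedPermMatrix ρ c)ᵀ (ρ i) i = (-1) ^ Fintype.card ι * ∏ i, c i := by
    simp only [hentry, if_neg (Ne.symm (hfix _)), if_true, zero_sub]
    rw [prod_neg, Equiv.prod_comp ρ c, card_univ]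
  rw [hid, hcyc, hρ.sign, hsupp, card_univ, Perm.sign_one, one_smul, Units.smul_def]
  have hsq : ((-1 : R) ^ Fintype.card ι) * (-1) ^ Fintype.card ι = 1 := by
    rw [← mul_pow]; simp
  push_cast
  rw [neg_smul, zsmul_eq_mul]
  push_cast
  linear_combination (-∏ i, c i) * hsq

theorem det_one_sub_weightedPermMatrix_of_prodEquiv {ρ : Perm κ} (hρ : ρ.IsCycle)
    (hsupp : ρ.support = univ) (e : κ × K ≃ ι) (π : Perm ι)
    (he : ∀ i k, π (e (i, k)) = e (ρ i, k)) (w : ι → R) :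
    (1 - weightedPermMatrix π w).det = ∏ k, (1 - ∏ i, w (e (i, k))) := by
  have hblock : (1 - weightedPermMatrix π w).submatrix e e =
      blockDiagonal fun k => 1 - weightedPermMatrix ρ fun i => w (e (i, k)) := by
    ext ⟨i, k⟩ ⟨j, l⟩
    by_cases hkl : k = l
    · subst hkl
      simp [weightedPermMatrix, Matrix.one_apply, he, e.injective.eq_iff, blockDiagonal_apply]
    · simp [weightedPermMatrix, he, e.injective.eq_iff, hkl, Ne.symm hkl, blockDiagonal_apply]
  rw [← det_submatrix_equiv_self e, hblock, det_blockDiagonal]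
  exact prod_congr rfl fun k _ => det_one_sub_weightedPermMatrix_of_isCycle hρ hsupp _

end WeightedPermMatrix

section CosetEquiv

variable {G : Type*} [Group G] [Finite G]

noncomputable def zpowersCosetEquiv (g : G) : Fin (orderOf g) × (G ⧸ Subgroup.zpowers g) ≃ G :=
  Equiv.ofBijective (fun p => p.2.out * g ^ (p.1 : ℕ)) <| by
    classical
    constructor
    · rintro ⟨i, c⟩ ⟨j, d⟩ h
      have hcd : c = d := by
        simpa only [QuotientGroup.mk_mul_of_mem _ (Subgroup.npow_mem_zpowers g _),
          QuotientGroup.out_eq'] using congrArg (QuotientGroup.mk (s := Subgroup.zpowers g)) h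
      subst hcd
      have hij := pow_injOn_Iio_orderOf i.isLt j.isLt (mul_left_cancel h)
      rw [Fin.ext hij]
    · intro x
      have hmem : (QuotientGroup.mk x : G ⧸ Subgroup.zpowers g).out⁻¹ * x ∈ Subgroup.zpowers g :=
        QuotientGroup.eq.mp (QuotientGroup.out_eq' _)
      obtain ⟨k, hk, hkx⟩ := Finset.mem_image.mp (mem_zpowers_iff_mem_range_orderOf.mp hmem)
      exact ⟨(⟨k, Finset.mem_range.mp hk⟩, QuotientGroup.mk x), by simp [hkx]⟩

theorem zpowersCosetEquiv_apply (g : G) (i : Fin (orderOf g)) (c : G ⧸ Subgroup.zpowers g) :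
    zpowersCosetEquiv g (i, c) = c.out * g ^ (i : ℕ) :=
  rfl

theorem zpowersCosetEquiv_finRotate (g : G) (i : Fin (orderOf g)) (c : G ⧸ Subgroup.zpowers g) :
    zpowersCosetEquiv g (finRotate _ i, c) = zpowersCosetEquiv g (i, c) * g := by
  have := i.neZero
  rw [zpowersCosetEquiv_apply, zpowersCosetEquiv_apply, finRotate_apply, Fin.val_add,
    pow_mod_orderOf, pow_add, ← mul_assoc, Fin.val_one', pow_mod_orderOf, pow_one]

end CosetEquiv

section PermCounting

variable {α : Type*} [Fintype α] [DecidableEq α]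

def permMapsOntoEquiv (S T : Finset α) :
    {τ : Perm α // ∀ x, x ∈ S ↔ τ x ∈ T} ≃
      ({x // x ∈ S} ≃ {x // x ∈ T}) × ({x // x ∉ S} ≃ {x // x ∉ T}) where
  toFun τ := (τ.1.subtypeEquiv τ.2, τ.1.subtypeEquiv fun x => not_congr (τ.2 x))
  invFun p := ⟨p.1.subtypeCongr p.2, fun x => by
    by_cases hx : x ∈ S
    · simp [Equiv.subtypeCongr, Equiv.sumCompl, hx]
    · simp [Equiv.subtypeCongr, Equiv.sumCompl, hx, (p.2 ⟨x, hx⟩).2]⟩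
  left_inv τ := by
    ext x
    by_cases hx : x ∈ S <;> simp [Equiv.subtypeCongr, Equiv.sumCompl, hx]
  right_inv p := by
    ext x <;> simp [Equiv.subtypeCongr, Equiv.sumCompl, x.2]

theorem card_filter_perm_image_eq {S T : Finset α} (h : #S = #T) :
    #{τ : Perm α | S.image τ = T} = (#S)! * (Fintype.card α - #S)! := by
  have hiff (τ : Perm α) : S.image τ = T ↔ ∀ x, x ∈ S ↔ τ x ∈ T := by
    constructor
    · rintro rfl x
      simp
    · intro hτ
      ext y
      simpa [← τ.eq_symm_apply] using hτ (τ.symm y)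
  have hin : Fintype.card S = Fintype.card T := by simp [h]
  have hout : Fintype.card {x // x ∉ S} = Fintype.card {x // x ∉ T} := by
    simp [Fintype.card_subtype_compl, h]
  rw [← Fintype.card_subtype, Fintype.card_congr ((Equiv.subtypeEquivRight hiff).trans
    (permMapsOntoEquiv S T)), Fintype.card_prod, Fintype.card_equiv (Fintype.equivOfCardEq hin),
    Fintype.card_equiv (Fintype.equivOfCardEq hout), Fintype.card_subtype_compl, Fintype.card_coe]

variable {σ : Perm α}

theorem card_filter_quotient_zpowers_image_support_eq (hσ : σ.IsCycle) {T : Finset α}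
    (hT : #T = #σ.support) :
    #{c : Perm α ⧸ Subgroup.zpowers σ | σ.support.image c.out = T} =
      (#σ.support - 1)! * (Fintype.card α - #σ.support)! := by
  have himage (i : Fin (orderOf σ)) (c : Perm α ⧸ Subgroup.zpowers σ) :
      σ.support.image (zpowersCosetEquiv σ (i, c)) = σ.support.image c.out := by
    rw [zpowersCosetEquiv_apply, Perm.coe_mul, ← image_image, σ.image_pow_support]
  have hfiber : ({τ : Perm α | σ.support.image τ = T} : Finset (Perm α)) =
      ((univ : Finset (Fin (orderOf σ))) ×ˢ
        ({c : Perm α ⧸ Subgroup.zpowers σ | σ.support.image c.out = T} : Finset _)).map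
        (zpowersCosetEquiv σ).toEmbedding := by
    ext τ
    obtain ⟨⟨i, c⟩, rfl⟩ := (zpowersCosetEquiv σ).surjective τ
    simp [himage]
  have hcount := card_filter_perm_image_eq hT.symm
  have hpos : 0 < #σ.support := by have := hσ.two_le_card_support; omega
  rw [hfiber, card_map, card_product, Finset.card_univ, Fintype.card_fin, hσ.orderOf,
    ← Nat.mul_factorial_pred hpos.ne', mul_assoc] at hcount
  exact Nat.eq_of_mul_eq_mul_left hpos hcount

theorem prod_quotient_zpowers_image_support {M : Type*} [CommMonoid M] (hσ : σ.IsCycle)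
    (F : Finset α → M) :
    ∏ c : Perm α ⧸ Subgroup.zpowers σ, F (σ.support.image c.out) =
      ∏ T ∈ powersetCard #σ.support univ,
        F T ^ ((#σ.support - 1)! * (Fintype.card α - #σ.support)!) := by
  rw [← prod_fiberwise_of_maps_to (t := powersetCard #σ.support univ)
    (g := fun c => σ.support.image c.out) fun c _ => mem_powersetCard_univ.mpr
      (card_image_of_injective _ c.out.injective)]
  refine prod_congr rfl fun T hT => ?_
  rw [prod_congr rfl fun c hc => congrArg F (mem_filter.mp hc).2, prod_const,
    card_filter_quotient_zpowers_image_support_eq hσ (mem_powersetCard_univ.mp hT)]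

end PermCounting

namespace IsTCycle

variable {n : ℕ} {a b : Fin n} {s : Perm (Fin n)}

theorem val_apply_s11 (hs : IsTCycle a b s) (i : Fin n) :
    (s i : ℕ) =
      if (i : ℕ) < a ∨ (b : ℕ) < i then (i : ℕ) else if i = b then (a : ℕ) else (i : ℕ) + 1 := by
  obtain ⟨hshift, hlast, hfix⟩ := hs
  split_ifs with hout hib
  · exact congrArg Fin.val (hfix i fun ⟨hai, hib⟩ => by
      rw [Fin.le_def] at hai hib; omega)
  · rw [hib, hlast]
  · push Not at hout
    exact hshift i (Fin.le_def.mpr hout.1) (lt_of_le_of_ne (Fin.le_def.mpr hout.2) hib)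

theorem eq_cycleIcc (hs : IsTCycle a b s) : s = Fin.cycleIcc a b := by
  have := a.neZero
  ext i
  rw [val_apply_s11 hs]
  rcases lt_or_ge i a with hia | hai
  · simp [Fin.cycleIcc_of_lt hia, hia]
  rcases lt_or_ge b i with hbi | hib
  · simp [Fin.cycleIcc_of_gt hbi, hbi]
  rw [Fin.cycleIcc_of_le_of_le hai hib, if_neg (by rw [Fin.le_def] at hai hib; omega)]
  split_ifs with hb
  · rfl
  · have := lt_of_le_of_ne hib hb
    rw [Fin.val_add_one_of_lt' (by rw [Fin.lt_def] at this; omega)]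

theorem isCycle (hab : a < b) (hs : IsTCycle a b s) : s.IsCycle :=
  eq_cycleIcc hs ▸ Fin.isCycle_cycleIcc hab

theorem support_eq (hab : a < b) (hs : IsTCycle a b s) : s.support = Icc a b := by
  ext i
  have hi := val_apply_s11 hs i
  rw [Perm.mem_support, mem_Icc, Ne, Fin.ext_iff, Fin.le_def, Fin.le_def]
  rw [Fin.lt_def] at hab
  split_ifs at hi with hout hib
  · omega
  · subst hib; omega
  · omega

theorem invSet_eq (hab : a < b) (hs : IsTCycle a b s) : invSet s = (Icc a b).erase b ×ˢ {b} := by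
  ext ⟨x, y⟩
  have hx := val_apply_s11 hs x
  have hy := val_apply_s11 hs y
  simp only [invSet, mem_filter, mem_univ, true_and, mem_product, mem_erase, mem_Icc,
    mem_singleton, Fin.lt_def, Fin.le_def, Fin.ext_iff]
  rw [Fin.lt_def] at hab
  split_ifs at hx hy <;> omega

end IsTCycle

theorem twistMat_eq_weightedPermMatrix (n : ℕ) (q : Fin n → Fin n → ℂ) (g : Perm (Fin n)) :
    twistMat n q g =
      weightedPermMatrix (Equiv.mulRight g) fun τ => ∏ p ∈ invSet g, q (τ p.2) (τ p.1) := by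
  ext σ τ
  simp only [twistMat, weightedPermMatrix, of_apply, coe_mulRight, eq_mul_inv_iff_mul_eq, eq_comm]
  -- the two sides differ only in the `Decidable` instance of the test
  congr

theorem sigmaT_image_s11 {n : ℕ} (q : Fin n → Fin n → ℂ) (τ : Perm (Fin n)) (T : Finset (Fin n)) :
    sigmaT q (T.image τ) = ∏ u ∈ T, ∏ v ∈ T.erase u, q (τ u) (τ v) := by
  rw [sigmaT, prod_filter, prod_product, prod_image fun x _ y _ h => τ.injective h]
  refine prod_congr rfl fun u _ => ?_
  rw [prod_image fun x _ y _ h => τ.injective h, ← prod_filter]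
  simp only [τ.injective.ne_iff, filter_ne]

theorem det_one_sub_twistMat_general (n : ℕ) (q : Fin n → Fin n → ℂ)
    (a b : Fin n) (hab : a < b) (s : Equiv.Perm (Fin n)) (hs : IsTCycle a b s) :
    ((1 : PermMatrix n) - twistMat n q s).det =
      ∏ T ∈ Finset.powersetCard ((b : ℕ) - (a : ℕ) + 1) (Finset.univ : Finset (Fin n)),
        (1 - sigmaT q T) ^
          (Nat.factorial ((b : ℕ) - (a : ℕ)) *
            Nat.factorial (n - (b : ℕ) + (a : ℕ) - 1)) := by
  have hab' : (a : ℕ) < b := hab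
  have hcyc := IsTCycle.isCycle hab hs
  have hsupp := IsTCycle.support_eq hab hs
  have hb : b ∈ s.support := hsupp ▸ mem_Icc.mpr ⟨hab.le, le_rfl⟩
  have hcard : #s.support = b - a + 1 := by
    rw [hsupp, Fin.card_Icc]
    omega
  have horder : 2 ≤ orderOf s := hcyc.orderOf ▸ hcyc.two_le_card_support
  have hcoset (c : Perm (Fin n) ⧸ Subgroup.zpowers s) :
      ∏ i, ∏ p ∈ invSet s, q (zpowersCosetEquiv s (i, c) p.2) (zpowersCosetEquiv s (i, c) p.1) =
        sigmaT q (s.support.image c.out) := by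
    rw [sigmaT_image_s11, ← hcyc.prod_pow_apply_prod_erase hb, IsTCycle.invSet_eq hab hs, ← hsupp]
    simp only [prod_product, prod_singleton, zpowersCosetEquiv_apply, Perm.coe_mul,
      Function.comp_apply]
  rw [twistMat_eq_weightedPermMatrix, det_one_sub_weightedPermMatrix_of_prodEquiv
    (isCycle_finRotate_of_le horder) (support_finRotate_of_le horder) (zpowersCosetEquiv s) _
    fun i c => (zpowersCosetEquiv_finRotate s i c).symm]
  simp_rw [hcoset]
  have hcompl : n - ((b : ℕ) - a + 1) = n - b + a - 1 := by
    have := b.isLt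
    omega
  rw [prod_quotient_zpowers_image_support hcyc fun T => 1 - sigmaT q T, hcard, Fintype.card_fin,
    Nat.add_sub_cancel, hcompl]

/-- For `a < b` in `Fin n`, the determinant of `I − M_q(t_{b,a})` factors as
`∏_T (1 − σ_T)^{(b−a)!·(n−b+a−1)!}`, the product being over all subsets
`T ⊆ Fin n` of cardinality `b − a + 1`. -/
theorem det_one_sub_twistMat (n : ℕ) (hn : 1 ≤ n) (q : Fin n → Fin n → ℂ)
    (a b : Fin n) (hab : a < b) (s : Equiv.Perm (Fin n)) (hs : IsTCycle a b s) :
    ((1 : PermMatrix n) - twistMat n q s).det =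
      ∏ T ∈ Finset.powersetCard ((b : ℕ) - (a : ℕ) + 1) (Finset.univ : Finset (Fin n)),
        (1 - sigmaT q T) ^
          (Nat.factorial ((b : ℕ) - (a : ℕ)) *
            Nat.factorial (n - (b : ℕ) + (a : ℕ) - 1)) :=
  det_one_sub_twistMat_general n q a b hab s hs
end
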